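/- Let S be a symmetric Seidel matrix of order n = 4k+2 with k ≥ 1. Then ind(S) = 0 if and only if the characteristic polynomial of S equals (x² - (4k+1))^{2k+1}. -/

import Mathlib

open Matrix Polynomial

/-- `S` is a principal submatrix of `Q`. -/
def IsPrincipalSubmatrix {m n : ℕ} (S : Matrix (Fin m) (Fin m) ℝ)
    (Q : Matrix (Fin n) (Fin n) ℝ) : Prop :=
  ∃ f : Fin m → Fin n, StrictMono f ∧ ∀ i j, S i j = Q (f i) (f j)

/-- `Q` is quasi-orthogonal: `Qᵀ * Q = q • 1` for some `q > 0`. -/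
def IsQuasiOrthogonal {n : ℕ} (Q : Matrix (Fin n) (Fin n) ℝ) : Prop :=
  ∃ q : ℝ, 0 < q ∧ Qᵀ * Q = q • (1 : Matrix (Fin n) (Fin n) ℝ)

/-- algebraic multiplicity of `lam` as an eigenvalue of `S` (0 if not a root). -/
noncomputable def eigMult {n : ℕ} (S : Matrix (Fin n) (Fin n) ℝ) (lam : ℝ) : ℕ :=
  (Matrix.charpoly S).rootMultiplicity lam

/-- `ρ` is the spectral radius of the real matrix `S`. -/
def IsSpectralRadius {n : ℕ} (S : Matrix (Fin n) (Fin n) ℝ) (ρ : ℝ) : Prop :=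
  ((Matrix.charpoly S).IsRoot ρ ∨ (Matrix.charpoly S).IsRoot (-ρ)) ∧
    ∀ lam : ℝ, (Matrix.charpoly S).IsRoot lam → |lam| ≤ ρ

/-- quasi-orthogonality index: least `d` such that `S` is a principal submatrix of a
symmetric quasi-orthogonal matrix of order `n + d`. -/
noncomputable def qIndex {n : ℕ} (S : Matrix (Fin n) (Fin n) ℝ) : ℕ :=
  sInf {d : ℕ | ∃ Q : Matrix (Fin (n + d)) (Fin (n + d)) ℝ,
    Q.IsSymm ∧ IsQuasiOrthogonal Q ∧ IsPrincipalSubmatrix S Q}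

/-- symmetric Seidel matrix: zero diagonal, off-diagonal entries `±1`. -/
def IsSeidel {n : ℕ} (S : Matrix (Fin n) (Fin n) ℝ) : Prop :=
  S.IsSymm ∧ (∀ i, S i i = 0) ∧ ∀ i j, i ≠ j → S i j = 1 ∨ S i j = -1

/-!
A symmetric `S` of order `n` always sits in a symmetric quasi-orthogonal matrix of order `2n`:
the spectral decomposition gives a symmetric `B` commuting with `S` with `S² + B² = qI`, and then
`[[S, B], [B, -S]]` squares to `qI`. So the `sInf` defining the index is not that of the empty set,
and the index vanishes exactly when `S² = qI` for some `q > 0`.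

For a Seidel matrix the diagonal of `S²` forces `q = n - 1`. The eigenvalues are then `±√(n - 1)`,
and `tr S = 0` makes both multiplicities `n / 2`. Conversely, if the characteristic polynomial is
`(x² - (n - 1))^(n/2)`, every eigenvalue squares to `n - 1`, so `S² = (n - 1)I` by the spectral
theorem.
-/

open Unitary

lemma prod_X_sub_C_eq_X_sq_sub_C_pow {ι : Type*} [Fintype ι] {t : ι → ℝ} {c : ℝ} (hc : 0 < c)
    (ht : ∀ i, t i ^ 2 = c) (hsum : ∑ i, t i = 0) {m : ℕ} (hcard : Fintype.card ι = 2 * m) :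
    ∏ i, (X - C (t i)) = (X ^ 2 - C c) ^ m := by
  set r := √c
  have hr : 0 < r := Real.sqrt_pos.2 hc
  have hneg : ∀ i, t i ≠ r → t i = -r := fun i hi => by
    have : (t i + r) * (t i - r) = 0 := by
      rw [← sq_sub_sq, ht, Real.sq_sqrt hc.le, sub_self]
    exact eq_neg_of_add_eq_zero_left ((mul_eq_zero.1 this).resolve_right (sub_ne_zero.2 hi))
  set P := Finset.univ.filter fun i => t i = r
  set N := Finset.univ.filter fun i => ¬t i = r
  have hP : ∀ i ∈ P, t i = r := fun i hi => (Finset.mem_filter.1 hi).2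
  have hN : ∀ i ∈ N, t i = -r := fun i hi => hneg i (Finset.mem_filter.1 hi).2
  have hPN : P.card = N.card := by
    rw [← Finset.sum_filter_add_sum_filter_not _ (fun i => t i = r),
      Finset.sum_eq_card_nsmul hP, Finset.sum_eq_card_nsmul hN, nsmul_eq_mul, nsmul_eq_mul,
      mul_neg, add_neg_eq_zero] at hsum
    exact_mod_cast mul_right_cancel₀ hr.ne' hsum
  have hcardP : P.card = m := by
    have : P.card + N.card = 2 * m := by
      rw [Finset.card_filter_add_card_filter_not, Finset.card_univ, hcard]
    omega
  rw [← Finset.prod_filter_mul_prod_filter_not _ (fun i => t i = r),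
    Finset.prod_eq_pow_card (fun i hi => congrArg (X - C ·) (hP i hi)),
    Finset.prod_eq_pow_card (fun i hi => congrArg (X - C ·) (hN i hi)), ← hPN, hcardP, ← mul_pow,
    ← Real.sq_sqrt hc.le, C_pow, C_neg]
  ring

namespace Matrix.IsHermitian

variable {n : Type*} [Fintype n] [DecidableEq n] {S : Matrix n n ℝ}

lemma conj_diagonal_eigenvalues (hS : S.IsHermitian) :
    conjStarAlgAut ℝ _ hS.eigenvectorUnitary (diagonal hS.eigenvalues) = S := by
  simpa using hS.spectral_theorem.symm

lemma exists_commute_mul_self_add_mul_self_eq_smul_one (hS : S.IsHermitian) :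
    ∃ B : Matrix n n ℝ, B.IsHermitian ∧ Commute S B ∧
      ∃ q : ℝ, 0 < q ∧ S * S + B * B = q • 1 := by
  set t := hS.eigenvalues
  set q : ℝ := 1 + ∑ i, t i ^ 2
  have ht : ∀ i, t i ^ 2 ≤ q := fun i => by
    have := Finset.single_le_sum (fun j _ => sq_nonneg (t j)) (Finset.mem_univ i)
    linarith
  set g : n → ℝ := fun i => √(q - t i ^ 2)
  set φ := conjStarAlgAut ℝ _ hS.eigenvectorUnitary
  refine ⟨φ (diagonal g), ?_, ?_, q, by positivity, ?_⟩
  · rw [IsHermitian, ← star_eq_conjTranspose, ← map_star, star_eq_conjTranspose,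
      diagonal_conjTranspose, star_trivial]
  · rw [← hS.conj_diagonal_eigenvalues]
    exact (commute_diagonal _ _).map φ
  · rw [← hS.conj_diagonal_eigenvalues, ← map_mul, ← map_mul, ← map_add, diagonal_mul_diagonal,
      diagonal_mul_diagonal, diagonal_add, ← map_one φ, ← map_smul, smul_one_eq_diagonal]
    congr 2
    funext i
    simp only [g, Real.mul_self_sqrt (sub_nonneg.2 (ht i))]
    ring

lemma mul_self_eq_smul_one_iff (hS : S.IsHermitian) (c : ℝ) :
    S * S = c • 1 ↔ ∀ i, hS.eigenvalues i ^ 2 = c := by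
  conv_lhs => rw [← hS.conj_diagonal_eigenvalues, ← map_mul, ← map_one (conjStarAlgAut ℝ _ _),
    ← map_smul, EquivLike.apply_eq_iff_eq, diagonal_mul_diagonal, smul_one_eq_diagonal,
    diagonal_eq_diagonal_iff]
  simp only [sq]

lemma charpoly_eq_X_sq_sub_C_pow (hS : S.IsHermitian) {c : ℝ} (hc : 0 < c)
    (hSS : S * S = c • 1) (htr : S.trace = 0) {m : ℕ} (hcard : Fintype.card n = 2 * m) :
    S.charpoly = (X ^ 2 - C c) ^ m := by
  rw [hS.charpoly_eq]
  refine prod_X_sub_C_eq_X_sq_sub_C_pow hc ((hS.mul_self_eq_smul_one_iff c).1 hSS) ?_ hcard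
  simpa [hS.trace_eq_sum_eigenvalues] using htr

lemma mul_self_eq_smul_one_of_charpoly_eq (hS : S.IsHermitian) {c : ℝ} {m : ℕ}
    (h : S.charpoly = (X ^ 2 - C c) ^ m) : S * S = c • 1 := by
  refine (hS.mul_self_eq_smul_one_iff c).2 fun i => ?_
  have hroot : S.charpoly.IsRoot (hS.eigenvalues i) := by
    rw [hS.charpoly_eq, IsRoot, eval_prod]
    exact Finset.prod_eq_zero (Finset.mem_univ i) (by simp)
  rw [h, IsRoot, eval_pow] at hroot
  simpa [sub_eq_zero] using eq_zero_of_pow_eq_zero hroot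

end Matrix.IsHermitian

lemma fromBlocks_mul_self_of_commute {n R : Type*} [Fintype n] [DecidableEq n] [CommRing R]
    {S B : Matrix n n R} (hSB : Commute S B) {q : R} (h : S * S + B * B = q • 1) :
    fromBlocks S B B (-S) * fromBlocks S B B (-S) = q • 1 := by
  rw [fromBlocks_multiply, add_comm (B * B), ← fromBlocks_one, fromBlocks_smul]
  simp [hSB.eq, h]

lemma isPrincipalSubmatrix_iff_eq {n : ℕ} {S Q : Matrix (Fin n) (Fin n) ℝ} :
    IsPrincipalSubmatrix S Q ↔ S = Q := by
  constructor
  · rintro ⟨f, hf, hSQ⟩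
    obtain rfl := hf.eq_id
    exact Matrix.ext hSQ
  · rintro rfl
    exact ⟨id, strictMono_id, fun _ _ => rfl⟩

lemma exists_symm_quasiOrthogonal_of_commute {n : ℕ} {S B : Matrix (Fin n) (Fin n) ℝ}
    (hS : S.IsSymm) (hB : B.IsSymm) (hSB : Commute S B) {q : ℝ} (hq : 0 < q)
    (h : S * S + B * B = q • 1) :
    ∃ Q : Matrix (Fin (n + n)) (Fin (n + n)) ℝ,
      Q.IsSymm ∧ IsQuasiOrthogonal Q ∧ IsPrincipalSubmatrix S Q := by
  have hQ : (reindexAlgEquiv ℝ ℝ finSumFinEquiv (fromBlocks S B B (-S))).IsSymm := by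
    rw [IsSymm, coe_reindexAlgEquiv, transpose_reindex, fromBlocks_transpose, hS, hB,
      transpose_neg, hS]
  refine ⟨_, hQ, ⟨q, hq, ?_⟩, Fin.castAdd n, Fin.strictMono_castAdd n, fun i j => ?_⟩
  · rw [hQ, ← map_mul, fromBlocks_mul_self_of_commute hSB h, map_smul, map_one]
  · simp

lemma qIndex_eq_zero_iff {n : ℕ} {S : Matrix (Fin n) (Fin n) ℝ} (hS : S.IsSymm) :
    qIndex S = 0 ↔ ∃ q : ℝ, 0 < q ∧ S * S = q • 1 := by
  have hH : S.IsHermitian := isHermitian_iff_isSymm.2 hS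
  obtain ⟨B, hB, hSB, q, hq, h⟩ := hH.exists_commute_mul_self_add_mul_self_eq_smul_one
  have hne := exists_symm_quasiOrthogonal_of_commute hS (isHermitian_iff_isSymm.1 hB) hSB hq h
  rw [qIndex, Nat.sInf_eq_zero]
  refine (or_iff_left (Set.nonempty_iff_ne_empty.1 ⟨n, hne⟩)).trans ⟨?_, ?_⟩
  · rintro ⟨Q, hQ, ⟨q, hq, hQQ⟩, hSQ⟩
    obtain rfl := isPrincipalSubmatrix_iff_eq.1 hSQ
    exact ⟨q, hq, by rwa [hQ] at hQQ⟩
  · rintro ⟨q, hq, hSS⟩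
    exact ⟨S, hS, ⟨q, hq, by rwa [hS]⟩, isPrincipalSubmatrix_iff_eq.2 rfl⟩

namespace IsSeidel

variable {n : ℕ} {S : Matrix (Fin n) (Fin n) ℝ}

lemma mul_self_apply_self (hS : IsSeidel S) (i : Fin n) : (S * S) i i = n - 1 := by
  have hentry : ∀ j, S i j * S j i = 1 - (1 : Matrix (Fin n) (Fin n) ℝ) i j := fun j => by
    rcases eq_or_ne i j with rfl | hij
    · simp [hS.2.1]
    · rw [hS.1.apply i j, one_apply_ne hij]
      rcases hS.2.2 i j hij with h | h <;> rw [h] <;> norm_num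
  simp [mul_apply, hentry, Finset.sum_sub_distrib, one_apply]

lemma trace_eq_zero (hS : IsSeidel S) : S.trace = 0 := by
  simp [trace, hS.2.1]

end IsSeidel

theorem stmt9_general {k : ℕ}
    (S : Matrix (Fin (4 * k + 2)) (Fin (4 * k + 2)) ℝ) (hS : IsSeidel S) :
    qIndex S = 0 ↔ S.charpoly = (X ^ 2 - C ((4 * k + 1 : ℕ) : ℝ)) ^ (2 * k + 1) := by
  have hH : S.IsHermitian := isHermitian_iff_isSymm.2 hS.1
  have hpos : (0 : ℝ) < (4 * k + 1 : ℕ) := by positivity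
  rw [qIndex_eq_zero_iff hS.1]
  constructor
  · rintro ⟨q, -, hSS⟩
    obtain rfl : q = (4 * k + 1 : ℕ) := by
      have := hS.mul_self_apply_self 0
      rw [hSS, Matrix.smul_apply, one_apply_eq, smul_eq_mul, mul_one] at this
      rw [this]
      push_cast
      ring
    exact hH.charpoly_eq_X_sq_sub_C_pow hpos hSS hS.trace_eq_zero
      (by rw [Fintype.card_fin]; ring)
  · exact fun h => ⟨_, hpos, hH.mul_self_eq_smul_one_of_charpoly_eq h⟩

theorem stmt9 {k : ℕ} (hk : 1 ≤ k)
    (S : Matrix (Fin (4 * k + 2)) (Fin (4 * k + 2)) ℝ) (hS : IsSeidel S) :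
    qIndex S = 0 ↔ S.charpoly = (X ^ 2 - C ((4 * k + 1 : ℕ) : ℝ)) ^ (2 * k + 1) :=
  stmt9_general S hS
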